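/- arXiv:1805.08278 — 6 statements merged into one kernel-verified Lean document; each statement's English description precedes it below -/
import Mathlib

section
/- The function F : ℝ^d × Sym_d(ℝ) → ℝ defined by F(p,A) = ⟨p, cof(−A) p⟩ if (⟨q,p⟩ = 0 ⟹ ⟨q, A q⟩ ≤ 0 for all q), and F(p,A) = 0 otherwise, is continuous. -/
/-!
`Fop` is `p ⬝ᵥ cof (-A) *ᵥ p` on the set `S` where `A` is negative semidefinite on `p⊥`, and `0`
off it, so it suffices that `p ⬝ᵥ adjugate (-A) *ᵥ p` vanishes on the frontier of `S`. At a
frontier point with `p ≠ 0`, projecting onto `p⊥` shows that `A` is still negative semidefinite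
on `p⊥`, while compactness of the unit sphere gives a unit `q ⊥ p` with `0 ≤ qᵀ A q`. Then `q` is
isotropic, hence in the radical of the form on `p⊥`, so `A q = c p`. Applying `adjugate (-A)` to
`(-A) q = -c p` gives `c · pᵀ adjugate(-A) p = det(-A) · (p ⬝ᵥ q) = 0`.
-/

open Matrix

/-- The cofactor matrix of a square matrix: the transpose of the adjugate, i.e.
the unique continuous map with `cof M = det M • M⁻¹` for invertible `M`. -/
noncomputable def cof {d : ℕ} (M : Matrix (Fin d) (Fin d) ℝ) : Matrix (Fin d) (Fin d) ℝ :=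
  (Matrix.adjugate M)ᵀ

open Classical in
/-- The operator `F(p,A) = ⟨p, cof(−A) p⟩` when `A` is negative semidefinite on the
orthogonal complement of `p`, and `F(p,A) = 0` otherwise. -/
noncomputable def Fop {d : ℕ} (p : Fin d → ℝ) (A : Matrix (Fin d) (Fin d) ℝ) : ℝ :=
  if ∀ q : Fin d → ℝ, q ⬝ᵥ p = 0 → q ⬝ᵥ (A *ᵥ q) ≤ 0 then p ⬝ᵥ (cof (-A) *ᵥ p) else 0

open Metric

section OrthogonalComplement

variable {n : Type*} [Fintype n]

noncomputable def orthProj (p q : n → ℝ) : n → ℝ := q - ((q ⬝ᵥ p) / (p ⬝ᵥ p)) • p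

lemma orthProj_dotProduct (p q : n → ℝ) : orthProj p q ⬝ᵥ p = 0 := by
  by_cases hp : p = 0
  · simp [hp]
  have hpp : p ⬝ᵥ p ≠ 0 := fun h => hp (dotProduct_self_eq_zero.mp h)
  simp [orthProj, sub_dotProduct, hpp]

lemma orthProj_of_dotProduct_eq_zero {p q : n → ℝ} (h : q ⬝ᵥ p = 0) : orthProj p q = q := by
  simp [orthProj, h]

lemma continuousAt_orthProj {p : n → ℝ} (hp : p ≠ 0) (q : n → ℝ) :
    ContinuousAt (fun p' => orthProj p' q) p := by
  have hpp : p ⬝ᵥ p ≠ 0 := fun h => hp (dotProduct_self_eq_zero.mp h)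
  unfold orthProj
  fun_prop (disch := exact hpp)

lemma exists_eq_smul_of_forall_dotProduct_eq_zero {p v : n → ℝ}
    (h : ∀ r, r ⬝ᵥ p = 0 → r ⬝ᵥ v = 0) : ∃ c : ℝ, v = c • p := by
  have hp := orthProj_dotProduct p v
  have hrr : orthProj p v ⬝ᵥ orthProj p v = 0 := by
    nth_rw 2 [orthProj]
    rw [dotProduct_sub, dotProduct_smul, h _ hp, hp, smul_zero, sub_zero]
  exact ⟨_, sub_eq_zero.mp (dotProduct_self_eq_zero.mp hrr)⟩

def NegSemidefOnOrth (p : n → ℝ) (A : Matrix n n ℝ) : Prop :=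
  ∀ q, q ⬝ᵥ p = 0 → q ⬝ᵥ (A *ᵥ q) ≤ 0

lemma dotProduct_mulVec_eq_zero_of_isotropic {p q r : n → ℝ} {A : Matrix n n ℝ} (hA : A.IsSymm)
    (hS : NegSemidefOnOrth p A) (hqp : q ⬝ᵥ p = 0) (hq : q ⬝ᵥ (A *ᵥ q) = 0) (hrp : r ⬝ᵥ p = 0) :
    r ⬝ᵥ (A *ᵥ q) = 0 := by
  have hsymm : q ⬝ᵥ (A *ᵥ r) = r ⬝ᵥ (A *ᵥ q) := by
    rw [dotProduct_mulVec, ← mulVec_transpose, hA.eq, dotProduct_comm]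
  have hquad : ∀ t : ℝ,
      0 ≤ -(r ⬝ᵥ (A *ᵥ r)) * (t * t) + -(2 * r ⬝ᵥ (A *ᵥ q)) * t + 0 := by
    intro t
    have h := hS (q + t • r) (by simp [add_dotProduct, hqp, hrp])
    simp only [mulVec_add, mulVec_smul, dotProduct_add, add_dotProduct, dotProduct_smul,
      smul_dotProduct, smul_eq_mul, hq, hsymm] at h
    linarith
  have := discrim_le_zero hquad
  rw [discrim] at this
  nlinarith [sq_nonneg (r ⬝ᵥ (A *ᵥ q))]

end OrthogonalComplement

section Adjugate

variable {n : Type*} [Fintype n] [DecidableEq n]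

lemma dotProduct_adjugate_mulVec_eq_zero_of_ne_zero {R : Type*} [CommRing R]
    [NoZeroDivisors R] {M : Matrix n n R} {p q : n → R} {c : R} (hc : c ≠ 0)
    (hqp : q ⬝ᵥ p = 0) (hMq : M *ᵥ q = c • p) : p ⬝ᵥ (adjugate M *ᵥ p) = 0 := by
  have h : c • (adjugate M *ᵥ p) = M.det • q := by
    rw [← mulVec_smul, ← hMq, mulVec_mulVec, adjugate_mul, smul_mulVec, one_mulVec]
  have h' := congrArg (p ⬝ᵥ ·) h
  simp only [dotProduct_smul, smul_eq_mul, dotProduct_comm p q, hqp, mul_zero] at h'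
  exact (mul_eq_zero.mp h').resolve_left hc

/-- The case `c = 0` follows by perturbing `M` in the direction `p qᵀ`, which keeps `q` mapped
into the line `ℝ p` but moves the coefficient `c` away from zero. -/
lemma dotProduct_adjugate_mulVec_eq_zero {M : Matrix n n ℝ} {p q : n → ℝ}
    {c : ℝ} (hq : q ≠ 0) (hqp : q ⬝ᵥ p = 0) (hMq : M *ᵥ q = c • p) :
    p ⬝ᵥ (adjugate M *ᵥ p) = 0 := by
  have hqq : q ⬝ᵥ q ≠ 0 := fun h => hq (dotProduct_self_eq_zero.mp h)
  have hcont : Continuous fun t : ℝ => p ⬝ᵥ (adjugate (M + t • vecMulVec p q) *ᵥ p) := by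
    fun_prop
  have hzero : Set.EqOn (fun t : ℝ => p ⬝ᵥ (adjugate (M + t • vecMulVec p q) *ᵥ p)) (fun _ => 0)
      {-c / (q ⬝ᵥ q)}ᶜ := by
    intro t ht
    refine dotProduct_adjugate_mulVec_eq_zero_of_ne_zero (c := c + t * (q ⬝ᵥ q)) ?_ hqp ?_
    · intro h
      apply ht
      rw [Set.mem_singleton_iff, eq_div_iff hqq]
      linarith
    · simp [add_mulVec, hMq, smul_mulVec, vecMulVec_mulVec, add_smul, mul_smul]
  simpa using congrFun (hcont.ext_on (dense_compl_singleton _) continuous_const hzero) 0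

end Adjugate

section Closure

variable {n : Type*} [Fintype n]

lemma negSemidefOnOrth_of_mem_closure {p : n → ℝ} {A : Matrix n n ℝ} (hp : p ≠ 0)
    (h : (p, A) ∈ closure {x : (n → ℝ) × Matrix n n ℝ | NegSemidefOnOrth x.1 x.2}) :
    NegSemidefOnOrth p A := by
  intro q hq
  have hcont : ContinuousAt
      (fun x : (n → ℝ) × Matrix n n ℝ => orthProj x.1 q ⬝ᵥ (x.2 *ᵥ orthProj x.1 q)) (p, A) := by
    have : ContinuousAt (fun x : (n → ℝ) × Matrix n n ℝ => orthProj x.1 q) (p, A) :=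
      ContinuousAt.comp (g := fun p' => orthProj p' q) (continuousAt_orthProj hp q) continuousAt_fst
    fun_prop
  simpa [orthProj_of_dotProduct_eq_zero hq] using
    hcont.continuousWithinAt.closure_le h continuousWithinAt_const
      fun x hx => hx _ (orthProj_dotProduct x.1 q)

lemma exists_dotProduct_mulVec_nonneg_of_mem_closure_compl {p : n → ℝ} {A : Matrix n n ℝ}
    (h : (p, A) ∈ closure {x : (n → ℝ) × Matrix n n ℝ | NegSemidefOnOrth x.1 x.2}ᶜ) :
    ∃ q ≠ 0, q ⬝ᵥ p = 0 ∧ 0 ≤ q ⬝ᵥ (A *ᵥ q) := by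
  let K : Set (((n → ℝ) × Matrix n n ℝ) × sphere (0 : n → ℝ) 1) :=
    {z | (z.2 : n → ℝ) ⬝ᵥ z.1.1 = 0} ∩ {z | 0 ≤ (z.2 : n → ℝ) ⬝ᵥ (z.1.2 *ᵥ z.2)}
  have hK : IsClosed K :=
    (isClosed_eq (by fun_prop) continuous_const).inter (isClosed_le continuous_const (by fun_prop))
  have hsub : {x : (n → ℝ) × Matrix n n ℝ | NegSemidefOnOrth x.1 x.2}ᶜ ⊆ Prod.fst '' K := by
    intro x hx
    obtain ⟨q, hqp, hqA⟩ : ∃ q, q ⬝ᵥ x.1 = 0 ∧ 0 < q ⬝ᵥ (x.2 *ᵥ q) := by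
      simpa [NegSemidefOnOrth] using hx
    have hq : q ≠ 0 := by rintro rfl; simp at hqA
    refine ⟨(x, ⟨‖q‖⁻¹ • q, ?_⟩), ⟨?_, ?_⟩, rfl⟩
    · simp [norm_smul, hq]
    · simp only [Set.mem_ofPred_eq, smul_dotProduct, hqp, smul_zero]
    · simp only [Set.mem_ofPred_eq, mulVec_smul, dotProduct_smul, smul_dotProduct, smul_eq_mul]
      positivity
  obtain ⟨⟨x, q, hq⟩, ⟨hqp, hqA⟩, rfl⟩ :=
    closure_minimal hsub (isClosedMap_fst_of_compactSpace K hK) h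
  exact ⟨q, ne_zero_of_mem_unit_sphere ⟨q, hq⟩, hqp, hqA⟩

end Closure

lemma dotProduct_adjugate_neg_mulVec_eq_zero_of_mem_frontier {n : Type*} [Fintype n]
    [DecidableEq n] {p : n → ℝ} {A : Matrix n n ℝ} (hA : A.IsSymm)
    (h : (p, A) ∈ frontier {x : (n → ℝ) × Matrix n n ℝ | NegSemidefOnOrth x.1 x.2}) :
    p ⬝ᵥ (adjugate (-A) *ᵥ p) = 0 := by
  rw [frontier_eq_closure_inter_closure] at h
  rcases eq_or_ne p 0 with rfl | hp
  · simp
  have hS := negSemidefOnOrth_of_mem_closure hp h.1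
  obtain ⟨q, hq, hqp, hqA⟩ := exists_dotProduct_mulVec_nonneg_of_mem_closure_compl h.2
  have hq_iso : q ⬝ᵥ (A *ᵥ q) = 0 := le_antisymm (hS q hqp) hqA
  obtain ⟨c, hc⟩ := exists_eq_smul_of_forall_dotProduct_eq_zero fun r hr =>
    dotProduct_mulVec_eq_zero_of_isotropic hA hS hqp hq_iso hr
  exact dotProduct_adjugate_mulVec_eq_zero (c := -c) hq hqp (by rw [neg_mulVec, hc, neg_smul])

/-- `F : ℝ^d × Sym_d(ℝ) → ℝ` is continuous. -/
theorem Fop_continuous {d : ℕ} :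
    Continuous (fun pA : (Fin d → ℝ) × {A : Matrix (Fin d) (Fin d) ℝ // A.IsSymm} =>
      Fop pA.1 (pA.2 : Matrix (Fin d) (Fin d) ℝ)) := by
  classical
  let ι : (Fin d → ℝ) × {A : Matrix (Fin d) (Fin d) ℝ // A.IsSymm} →
      (Fin d → ℝ) × Matrix (Fin d) (Fin d) ℝ := fun x => (x.1, x.2)
  have hι : Continuous ι := by fun_prop
  refine Continuous.if (fun x hx => ?_) (by unfold cof; fun_prop) continuous_const
  have hfr : ι x ∈ frontier {x | NegSemidefOnOrth x.1 x.2} := hι.frontier_preimage_subset _ hx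
  rw [cof, dotProduct_mulVec, vecMul_transpose, dotProduct_comm]
  exact dotProduct_adjugate_neg_mulVec_eq_zero_of_mem_frontier x.2.2 hfr
end

section
/- Let F(p,A) = ⟨p, cof(−A) p⟩ when A is negative semidefinite on the orthogonal complement of p, and F(p,A) = 0 otherwise. Then F is degenerate elliptic: for all p ∈ ℝ^d and symmetric A ≤ B (i.e., B − A positive semidefinite), F(p,A) ≥ F(p,B). -/
open Matrix

/-!
For `p_ℓ ≠ 0` let `Q` be the identity matrix with its `ℓ`-th column replaced by `p`, and let the
rows of `R` be the rows of `Q⁻¹` other than the `ℓ`-th; they annihilate `p`. From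
`Qᵀ adj(Q X Qᵀ) Q = (det Q)² adj X` one gets `⟨p, adj(M) p⟩ = p_ℓ² det(R M Rᵀ)`. When `M` is
positive semidefinite on `p^⊥`, so is the compression `R M Rᵀ`, and it grows with `M` in the
Loewner order. As the determinant is nonnegative and monotone on positive semidefinite matrices,
`⟨p, adj(−A) p⟩` is nonnegative and dominates `⟨p, adj(−B) p⟩`. The transpose in `cof` does not
change the quadratic form.
-/
theorem Matrix.transpose_mul_adjugate_conj_mul {n : Type*} [Fintype n] [DecidableEq n]
    {R : Type*} [CommRing R] (Q X : Matrix n n R) :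
    Qᵀ * adjugate (Q * X * Qᵀ) * Q = Q.det ^ 2 • adjugate X := by
  rw [adjugate_mul_distrib, adjugate_mul_distrib, ← adjugate_transpose]
  calc Qᵀ * ((adjugate Q)ᵀ * (adjugate X * adjugate Q)) * Q
      = (Qᵀ * (adjugate Q)ᵀ) * adjugate X * (adjugate Q * Q) := by simp only [Matrix.mul_assoc]
    _ = Q.det ^ 2 • adjugate X := by
      rw [← transpose_mul, adjugate_mul, transpose_smul, transpose_one]
      simp [smul_smul, sq]

theorem Matrix.transpose_mul_mul_apply_diag {m n : Type*} [Fintype m] {R : Type*} [CommRing R]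
    (A : Matrix m n R) (B : Matrix m m R) (j : n) :
    (Aᵀ * B * A) j j = A.col j ⬝ᵥ (B *ᵥ A.col j) := by
  rw [dotProduct_mulVec, mul_apply']
  rfl

theorem Matrix.dotProduct_transpose_mulVec_self {n : Type*} [Fintype n] {K : Type*}
    [CommSemiring K] (A : Matrix n n K) (p : n → K) : p ⬝ᵥ (Aᵀ *ᵥ p) = p ⬝ᵥ (A *ᵥ p) := by
  rw [mulVec_transpose, dotProduct_comm, dotProduct_mulVec]

theorem Matrix.dotProduct_adjugate_mulVec_col {n : ℕ} {R : Type*} [CommRing R]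
    (M Q : Matrix (Fin (n + 1)) (Fin (n + 1)) R) (hQ : IsUnit Q.det) (ℓ : Fin (n + 1)) :
    Q.col ℓ ⬝ᵥ (adjugate M *ᵥ Q.col ℓ) =
      Q.det ^ 2 * (Q⁻¹.submatrix ℓ.succAbove id * M * (Q⁻¹.submatrix ℓ.succAbove id)ᵀ).det := by
  set X := Q⁻¹ * M * Q⁻¹ᵀ
  have hM : M = Q * X * Qᵀ := by
    rw [← Matrix.mul_assoc, ← Matrix.mul_assoc, mul_nonsing_inv Q hQ, Matrix.one_mul,
      Matrix.mul_assoc, ← transpose_mul, mul_nonsing_inv Q hQ, transpose_one, Matrix.mul_one]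
  have hminor : X.submatrix ℓ.succAbove ℓ.succAbove =
      Q⁻¹.submatrix ℓ.succAbove id * M * (Q⁻¹.submatrix ℓ.succAbove id)ᵀ := by
    rw [submatrix_mul _ _ _ _ _ Function.bijective_id,
      submatrix_mul _ _ _ _ _ Function.bijective_id, submatrix_id_id, transpose_submatrix]
  rw [← transpose_mul_mul_apply_diag]
  conv_lhs => rw [hM, transpose_mul_adjugate_conj_mul]
  rw [smul_apply, adjugate_fin_succ_eq_det_submatrix, hminor, ← two_mul, pow_mul]
  simp

theorem Matrix.det_one_updateCol {n : Type*} [Fintype n] [DecidableEq n] {K : Type*} [CommRing K]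
    (ℓ : n) (p : n → K) : ((1 : Matrix n n K).updateCol ℓ p).det = p ℓ := by
  rw [← cramer_apply, cramer_one]
  rfl

theorem Matrix.exists_dotProduct_adjugate_mulVec_eq {d : ℕ} {K : Type*} [Field K]
    (p : Fin d → K) :
    ∃ (m : ℕ) (c : K) (R : Matrix (Fin m) (Fin d) K), R *ᵥ p = 0 ∧
      ∀ M : Matrix (Fin d) (Fin d) K, p ⬝ᵥ (adjugate M *ᵥ p) = c ^ 2 * (R * M * Rᵀ).det := by
  by_cases hp : p = 0
  · exact ⟨0, 0, 0, by simp, fun M => by simp [hp]⟩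
  obtain ⟨ℓ, hℓ⟩ := Function.ne_iff.mp hp
  cases d with
  | zero => exact ℓ.elim0
  | succ n =>
    set Q := (1 : Matrix (Fin (n + 1)) (Fin (n + 1)) K).updateCol ℓ p
    have hQℓ : Q.col ℓ = p := by ext i; simp [Q]
    have hQ : IsUnit Q.det := by rw [det_one_updateCol]; exact hℓ.isUnit
    refine ⟨n, p ℓ, Q⁻¹.submatrix ℓ.succAbove id, ?_, fun M => ?_⟩
    · have hinv : Q⁻¹ *ᵥ p = Pi.single ℓ 1 := by
        rw [← hQℓ, ← mulVec_single_one, mulVec_mulVec, nonsing_inv_mul Q hQ, one_mulVec]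
      ext i
      change (Q⁻¹ *ᵥ p) (ℓ.succAbove i) = 0
      rw [hinv, Pi.single_eq_of_ne (ℓ.succAbove_ne i)]
    · rw [← hQℓ, dotProduct_adjugate_mulVec_col M Q hQ ℓ, det_one_updateCol, hQℓ]

theorem Matrix.one_le_det_of_posSemidef_sub_one {n : Type*} [Fintype n] [DecidableEq n]
    {H : Matrix n n ℝ} (hH : (H - 1).PosSemidef) : 1 ≤ H.det := by
  have hHerm : H.IsHermitian := by simpa using hH.isHermitian.add isHermitian_one
  have hspec : ∀ x ∈ spectrum ℝ H, 1 ≤ x := by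
    open scoped MatrixOrder in
    exact (algebraMap_le_iff_le_spectrum (a := H) hHerm.isSelfAdjoint).mp
      (by simpa [Matrix.le_iff] using hH)
  rw [hHerm.det_eq_prod_eigenvalues]
  exact_mod_cast Finset.one_le_prod fun i _ => hspec _ (hHerm.eigenvalues_mem_spectrum_real i)

theorem Matrix.PosSemidef.det_le_det_add {n : Type*} [Fintype n] [DecidableEq n]
    {S T : Matrix n n ℝ} (hS : S.PosSemidef) (hT : T.PosSemidef) : S.det ≤ (S + T).det := by
  open scoped MatrixOrder in
  by_cases hdet : S.det = 0
  · exact hdet ▸ (hS.add hT).det_nonneg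
  set R := CFC.sqrt S
  have hRR : R * R = S := CFC.sqrt_mul_sqrt_self S hS.nonneg
  have hRsymm : R.IsHermitian := (CFC.sqrt_nonneg S).posSemidef.isHermitian
  have hRunit : IsUnit R.det := by
    rw [isUnit_iff_ne_zero]; rintro h; exact hdet (by rw [← hRR, det_mul, h, zero_mul])
  have hsplit : S + T = R * (1 + R⁻¹ * T * R⁻¹) * R := by
    rw [Matrix.mul_add, Matrix.add_mul, Matrix.mul_one, hRR, ← Matrix.mul_assoc,
      ← Matrix.mul_assoc, mul_nonsing_inv R hRunit, Matrix.one_mul, Matrix.mul_assoc,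
      nonsing_inv_mul R hRunit, Matrix.mul_one]
  have hconj : (R⁻¹ * T * R⁻¹).PosSemidef := by
    have h := hT.mul_mul_conjTranspose_same R⁻¹
    rwa [hRsymm.inv.eq] at h
  have hone : 1 ≤ (1 + R⁻¹ * T * R⁻¹).det :=
    one_le_det_of_posSemidef_sub_one (by simpa using hconj)
  calc S.det = S.det * 1 := (mul_one _).symm
    _ ≤ S.det * (1 + R⁻¹ * T * R⁻¹).det := mul_le_mul_of_nonneg_left hone hS.det_nonneg
    _ = (S + T).det := by rw [hsplit, det_mul, det_mul, ← hRR, det_mul]; ring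

def Matrix.PosSemidefOnPerp {n : Type*} [Fintype n] (M : Matrix n n ℝ) (p : n → ℝ) : Prop :=
  ∀ q : n → ℝ, q ⬝ᵥ p = 0 → 0 ≤ q ⬝ᵥ (M *ᵥ q)

theorem Matrix.posSemidefOnPerp_neg_iff {n : Type*} [Fintype n] {A : Matrix n n ℝ} {p : n → ℝ} :
    (-A).PosSemidefOnPerp p ↔ ∀ q, q ⬝ᵥ p = 0 → q ⬝ᵥ (A *ᵥ q) ≤ 0 := by
  simp [PosSemidefOnPerp, neg_mulVec]

namespace Matrix.PosSemidefOnPerp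

variable {m n : Type*} [Fintype m] [Fintype n] {M N : Matrix n n ℝ} {p : n → ℝ}

theorem of_sub_posSemidef (hN : N.PosSemidefOnPerp p) (hMN : (M - N).PosSemidef) :
    M.PosSemidefOnPerp p := by
  intro q hq
  have h := hMN.dotProduct_mulVec_nonneg q
  rw [star_trivial, sub_mulVec, dotProduct_sub] at h
  linarith [hN q hq]

theorem posSemidef_mul_mul_transpose (hM : M.IsSymm) (hp : M.PosSemidefOnPerp p)
    {R : Matrix m n ℝ} (hR : R *ᵥ p = 0) : (R * M * Rᵀ).PosSemidef := by
  refine posSemidef_iff_dotProduct_mulVec.mpr ⟨?_, fun x => ?_⟩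
  · simp [IsHermitian, transpose_mul, hM.eq, Matrix.mul_assoc]
  · have hperp : (Rᵀ *ᵥ x) ⬝ᵥ p = 0 := by
      rw [mulVec_transpose, ← dotProduct_mulVec, hR, dotProduct_zero]
    rw [star_trivial, ← mulVec_mulVec, ← mulVec_mulVec, dotProduct_mulVec, ← mulVec_transpose]
    exact hp _ hperp

section

variable {d : ℕ} {M N : Matrix (Fin d) (Fin d) ℝ} {p : Fin d → ℝ}

theorem dotProduct_adjugate_mulVec_nonneg (hM : M.IsSymm) (hp : M.PosSemidefOnPerp p) :
    0 ≤ p ⬝ᵥ (adjugate M *ᵥ p) := by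
  obtain ⟨m, c, R, hR, hadj⟩ := exists_dotProduct_adjugate_mulVec_eq p
  rw [hadj]
  exact mul_nonneg (sq_nonneg c) (hp.posSemidef_mul_mul_transpose hM hR).det_nonneg

theorem dotProduct_adjugate_mulVec_mono (hN : N.IsSymm) (hp : N.PosSemidefOnPerp p)
    (hMN : (M - N).PosSemidef) : p ⬝ᵥ (adjugate N *ᵥ p) ≤ p ⬝ᵥ (adjugate M *ᵥ p) := by
  obtain ⟨m, c, R, hR, hadj⟩ := exists_dotProduct_adjugate_mulVec_eq p
  have hsplit : R * M * Rᵀ = R * N * Rᵀ + R * (M - N) * Rᵀ := by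
    rw [Matrix.mul_sub, Matrix.sub_mul]; abel
  have hdiff : (R * (M - N) * Rᵀ).PosSemidef := by
    simpa only [conjTranspose_eq_transpose_of_trivial] using hMN.mul_mul_conjTranspose_same R
  rw [hadj, hadj, hsplit]
  exact mul_le_mul_of_nonneg_left
    ((hp.posSemidef_mul_mul_transpose hN hR).det_le_det_add hdiff) (sq_nonneg c)

end

end Matrix.PosSemidefOnPerp

/-- `F` is degenerate elliptic: for symmetric `A ≤ B`, `F(p,A) ≥ F(p,B)`. -/
theorem Fop_degenerate_elliptic {d : ℕ} (p : Fin d → ℝ)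
    (A B : Matrix (Fin d) (Fin d) ℝ) (hA : A.IsSymm) (hB : B.IsSymm)
    (hAB : (B - A).PosSemidef) :
    Fop p B ≤ Fop p A := by
  have hneg : (-A - -B).PosSemidef := by rwa [neg_sub_neg]
  simp only [Fop, cof, dotProduct_transpose_mulVec_self]
  split_ifs with hBp hAp hAp <;> simp only [← posSemidefOnPerp_neg_iff] at hBp hAp
  · exact hBp.dotProduct_adjugate_mulVec_mono hB.neg hneg
  · exact absurd (hBp.of_sub_posSemidef hneg) hAp
  · exact hAp.dotProduct_adjugate_mulVec_nonneg hA.neg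
  · rfl
end

section
/- Let F(p,A) = ⟨p, cof(−A) p⟩ when ⟨q,p⟩ = 0 implies ⟨q,Aq⟩ ≤ 0, and F(p,A) = 0 otherwise. Then for every p ∈ ℝ^d, every symmetric A, and every d×d matrix B, one has F(Bᵀp, BᵀAB) = det(B)² F(p,A). -/
open Matrix

/-!
Since `cof` is multiplicative, `cof (-(Bᵀ A B)) = adj B · cof (-A) · adj Bᵀ`, and
`adj Bᵀ · Bᵀ = det B`, the quadratic form `⟨Bᵀp, cof(−BᵀAB) Bᵀp⟩` picks up exactly the factor
`det(B)²`. For invertible `B`, the substitution `q ↦ Bq` maps the orthogonal complement of `Bᵀp`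
onto that of `p`, so the sign condition defining `F` is unchanged; for singular `B` both sides
vanish.
-/

lemma cof_mul {d : ℕ} (M N : Matrix (Fin d) (Fin d) ℝ) : cof (M * N) = cof M * cof N := by
  simp only [cof, adjugate_mul_distrib, transpose_mul]

lemma cof_transpose {d : ℕ} (M : Matrix (Fin d) (Fin d) ℝ) : cof Mᵀ = adjugate M := by
  rw [cof, adjugate_transpose, transpose_transpose]

lemma cof_congr {d : ℕ} (M B : Matrix (Fin d) (Fin d) ℝ) :
    cof (Bᵀ * M * B) = adjugate B * cof M * adjugate Bᵀ := by
  rw [cof_mul, cof_mul, cof_transpose, ← cof_transpose Bᵀ, transpose_transpose]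

lemma dotProduct_adjugate_congr_mulVec {n R : Type*} [Fintype n] [DecidableEq n] [CommRing R]
    (B C : Matrix n n R) (p : n → R) :
    (Bᵀ *ᵥ p) ⬝ᵥ ((adjugate B * C * adjugate Bᵀ) *ᵥ (Bᵀ *ᵥ p)) =
      B.det ^ 2 * (p ⬝ᵥ (C *ᵥ p)) := by
  have hright : (adjugate B * C * adjugate Bᵀ) *ᵥ (Bᵀ *ᵥ p) = B.det • (adjugate B * C) *ᵥ p := by
    rw [mulVec_mulVec, Matrix.mul_assoc, adjugate_mul, det_transpose, Matrix.mul_smul,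
      Matrix.mul_one, smul_mulVec]
  have hleft : (Bᵀ *ᵥ p) ᵥ* adjugate B = B.det • p := by
    rw [← vecMul_transpose, vecMul_vecMul, transpose_transpose, mul_adjugate, vecMul_smul,
      vecMul_one]
  rw [hright, dotProduct_smul, ← mulVec_mulVec, dotProduct_mulVec, hleft, smul_dotProduct,
    smul_eq_mul, smul_eq_mul, ← mul_assoc, sq]

def NegOnOrthogonal {n R : Type*} [Fintype n] [CommRing R] [LE R] (p : n → R)
    (A : Matrix n n R) : Prop :=
  ∀ q : n → R, q ⬝ᵥ p = 0 → q ⬝ᵥ (A *ᵥ q) ≤ 0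

lemma negOnOrthogonal_congr_iff {n R : Type*} [Fintype n] [DecidableEq n] [CommRing R] [LE R]
    {B : Matrix n n R} (hB : IsUnit B.det) (p : n → R) (A : Matrix n n R) :
    NegOnOrthogonal (Bᵀ *ᵥ p) (Bᵀ * A * B) ↔ NegOnOrthogonal p A := by
  have hsurj : Function.Surjective B.mulVec :=
    mulVec_surjective_iff_isUnit.2 ((isUnit_iff_isUnit_det B).2 hB)
  have hdot (q w : n → R) : q ⬝ᵥ (Bᵀ *ᵥ w) = (B *ᵥ q) ⬝ᵥ w := by
    rw [dotProduct_mulVec, vecMul_transpose]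
  unfold NegOnOrthogonal
  conv_rhs => rw [hsurj.forall]
  simp only [hdot, ← mulVec_mulVec]

open Classical in
lemma Fop_eq_ite {d : ℕ} (p : Fin d → ℝ) (A : Matrix (Fin d) (Fin d) ℝ) :
    Fop p A = if NegOnOrthogonal p A then p ⬝ᵥ (cof (-A) *ᵥ p) else 0 :=
  rfl

theorem Fop_affine_covariant_general {d : ℕ} (p : Fin d → ℝ)
    (A : Matrix (Fin d) (Fin d) ℝ) (B : Matrix (Fin d) (Fin d) ℝ) :
    Fop (Bᵀ *ᵥ p) (Bᵀ * A * B) = (B.det) ^ 2 * Fop p A := by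
  have hquad := dotProduct_adjugate_congr_mulVec B (cof (-A)) p
  rw [← cof_congr, Matrix.mul_neg, Matrix.neg_mul] at hquad
  rw [Fop_eq_ite, Fop_eq_ite]
  rcases eq_or_ne B.det 0 with hB | hB
  · rw [hB, zero_pow two_ne_zero, zero_mul] at hquad ⊢
    split_ifs
    exacts [hquad, rfl]
  · rw [negOnOrthogonal_congr_iff hB.isUnit]
    split_ifs
    exacts [hquad, (mul_zero _).symm]

/-- Affine covariance of `F`: `F(Bᵀp, BᵀAB) = det(B)² F(p,A)` for symmetric `A` and
arbitrary `B`. -/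
theorem Fop_affine_covariant {d : ℕ} (p : Fin d → ℝ)
    (A : Matrix (Fin d) (Fin d) ℝ) (hA : A.IsSymm) (B : Matrix (Fin d) (Fin d) ℝ) :
    Fop (Bᵀ *ᵥ p) (Bᵀ * A * B) = (B.det) ^ 2 * Fop p A :=
  Fop_affine_covariant_general p A B
end

section
/- Let d ≥ 1 and define u(x) = −((d+1)/(2d)) β |x|^{2d/(d+1)} on ℝ^d for β > 0. Then u is smooth on ℝ^d \ {0} and satisfies ⟨Du(x), cof(−D²u(x)) Du(x)⟩ = β^{d+1} for every x ≠ 0. -/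
open Matrix
open scoped RealInnerProductSpace

/-- The gradient `Df(x)` of `f : ℝ^d → ℝ` as the vector of partial derivatives. -/
noncomputable def gradVec {d : ℕ} (f : EuclideanSpace ℝ (Fin d) → ℝ)
    (x : EuclideanSpace ℝ (Fin d)) : Fin d → ℝ :=
  fun i => fderiv ℝ f x (EuclideanSpace.single i 1)

/-- The Hessian `D²f(x)` of `f : ℝ^d → ℝ` as the matrix of second partial derivatives. -/
noncomputable def hessMat {d : ℕ} (f : EuclideanSpace ℝ (Fin d) → ℝ)
    (x : EuclideanSpace ℝ (Fin d)) : Matrix (Fin d) (Fin d) ℝ :=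
  Matrix.of fun i j =>
    fderiv ℝ (fun y => fderiv ℝ f y (EuclideanSpace.single j 1)) x (EuclideanSpace.single i 1)

lemma vecMulVec_mulVec_self {d : ℕ} (x : Fin d → ℝ) :
    vecMulVec x x *ᵥ x = (x ⬝ᵥ x) • x := by
  ext i
  simp [vecMulVec, mulVec, dotProduct]
  rw [Finset.sum_mul]
  exact Finset.sum_congr rfl fun j _ => by ring

lemma det_rank_one {d : ℕ} (a b : ℝ) (ha : a ≠ 0) (x : Fin (d+1) → ℝ) :
    det (a • (1 : Matrix (Fin (d+1)) (Fin (d+1)) ℝ) + b • vecMulVec x x)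
      = a ^ d * (a + b * (x ⬝ᵥ x)) := by
  have h1 : a • (1 : Matrix (Fin (d+1)) (Fin (d+1)) ℝ) + b • vecMulVec x x
      = a • ((1 : Matrix (Fin (d+1)) (Fin (d+1)) ℝ) + (b/a) • vecMulVec x x) := by
    rw [smul_add, smul_smul]
    field_simp
  rw [h1, det_smul, Fintype.card_fin]
  have h2 : (b/a) • vecMulVec x x = replicateCol Unit ((b/a) • x) * replicateRow Unit x := by
    ext i j
    simp [Matrix.mul_apply, vecMulVec, Matrix.replicateCol, Matrix.replicateRow, smul_eq_mul, mul_comm,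
      mul_assoc, mul_left_comm]
  rw [h2, det_one_add_replicateCol_mul_replicateRow]
  have : x ⬝ᵥ (b/a) • x = (b/a) * (x ⬝ᵥ x) := by
    simp [dotProduct_smul, smul_eq_mul]
  rw [this]
  field_simp
  ring

lemma adj_rank_one {d : ℕ} (a b : ℝ) (ha : a ≠ 0) (x : Fin (d+1) → ℝ)
    (hμ : 1 ≤ d → a + b * (x ⬝ᵥ x) ≠ 0) :
    adjugate (a • (1 : Matrix (Fin (d+1)) (Fin (d+1)) ℝ) + b • vecMulVec x x) *ᵥ x
      = a ^ d • x := by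
  rcases Nat.eq_zero_or_pos d with hd | hd
  · subst hd
    rw [adjugate_fin_one, pow_zero, one_smul, one_mulVec]
  set M := a • (1 : Matrix (Fin (d+1)) (Fin (d+1)) ℝ) + b • vecMulVec x x with hM
  have hμ' := hμ hd
  have hMx : M *ᵥ x = (a + b * (x ⬝ᵥ x)) • x := by
    rw [hM, add_mulVec, smul_mulVec, smul_mulVec, one_mulVec,
      vecMulVec_mulVec_self, smul_smul, add_smul]
  have key : adjugate M *ᵥ (M *ᵥ x) = det M • x := by
    rw [mulVec_mulVec, adjugate_mul, smul_mulVec, one_mulVec]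
  rw [hMx, mulVec_smul, det_rank_one a b ha x] at key
  apply smul_right_injective (Fin (d+1) → ℝ) hμ'
  dsimp only
  rw [key, mul_smul, smul_comm]

section helpers
variable {d : ℕ}

lemma hasFDerivAt_inner_self (x : EuclideanSpace ℝ (Fin d)) :
    HasFDerivAt (fun y : EuclideanSpace ℝ (Fin d) => ⟪y, y⟫)
      ((2 : ℝ) • (innerSL ℝ x)) x := by
  have h := (hasFDerivAt_id x).inner ℝ (hasFDerivAt_id x)
  refine h.congr_fderiv (Eq.symm ?_)
  ext h'
  simp [fderivInnerCLM_apply, real_inner_comm, two_mul]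

lemma hasFDerivAt_c_rpow_inner (c q : ℝ) {x : EuclideanSpace ℝ (Fin d)}
    (hx : ⟪x, x⟫ ≠ 0) :
    HasFDerivAt (fun y : EuclideanSpace ℝ (Fin d) => c * ⟪y, y⟫ ^ q)
      ((c * (2 * q * ⟪x, x⟫ ^ (q - 1))) • innerSL ℝ x) x := by
  have h2 : HasDerivAt (fun t : ℝ => t ^ q) (q * ⟪x, x⟫ ^ (q - 1)) (⟪x, x⟫) :=
    Real.hasDerivAt_rpow_const (Or.inl hx)
  have h3 := (HasDerivAt.comp_hasFDerivAt
      (f := fun y : EuclideanSpace ℝ (Fin d) => ⟪y, y⟫) x h2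
      (hasFDerivAt_inner_self x)).const_mul c
  refine h3.congr_fderiv (Eq.symm ?_)
  rw [smul_smul, smul_smul]
  ring_nf

lemma gradVec_c_rpow (c q : ℝ) {x : EuclideanSpace ℝ (Fin d)} (hx : x ≠ 0) :
    gradVec (fun y : EuclideanSpace ℝ (Fin d) => c * ⟪y, y⟫ ^ q) x
      = fun i => (c * (2 * q * ⟪x, x⟫ ^ (q - 1))) * x i := by
  funext i
  rw [gradVec, (hasFDerivAt_c_rpow_inner c q (inner_self_ne_zero.mpr hx)).fderiv]
  simp [innerSL_apply_apply, EuclideanSpace.inner_single_right]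

lemma hessMat_c_rpow (c q : ℝ) {x : EuclideanSpace ℝ (Fin d)} (hx : x ≠ 0) :
    hessMat (fun y : EuclideanSpace ℝ (Fin d) => c * ⟪y, y⟫ ^ q) x
      = (c * (2 * q * ⟪x, x⟫ ^ (q - 1))) • (1 : Matrix (Fin d) (Fin d) ℝ)
        + ((c * (2 * q)) * (2 * (q - 1) * ⟪x, x⟫ ^ (q - 1 - 1)))
            • vecMulVec (fun i => x i) (fun i => x i) := by
  have hS : ⟪x, x⟫ ≠ 0 := inner_self_ne_zero.mpr hx
  funext i j
  show fderiv ℝ (fun y => fderiv ℝ (fun y : EuclideanSpace ℝ (Fin d) => c * ⟪y, y⟫ ^ q) y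
      (EuclideanSpace.single j 1)) x (EuclideanSpace.single i 1) = _
  have hev : (fun y => fderiv ℝ (fun y : EuclideanSpace ℝ (Fin d) => c * ⟪y, y⟫ ^ q) y
      (EuclideanSpace.single j 1))
      =ᶠ[nhds x] (fun y : EuclideanSpace ℝ (Fin d) => (c * (2 * q)) * ⟪y, y⟫ ^ (q - 1) * y j) := by
    filter_upwards [IsOpen.mem_nhds isOpen_compl_singleton
      (by simpa using hx : x ∈ ({0}ᶜ : Set (EuclideanSpace ℝ (Fin d))))] with y hy
    have hy0 : (y : EuclideanSpace ℝ (Fin d)) ≠ 0 := by simpa using hy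
    rw [(hasFDerivAt_c_rpow_inner c q (inner_self_ne_zero.mpr hy0)).fderiv]
    simp only [ContinuousLinearMap.smul_apply, innerSL_apply_apply,
      EuclideanSpace.inner_single_right, conj_trivial, smul_eq_mul, one_mul]
    ring
  rw [hev.fderiv_eq]
  have hA := hasFDerivAt_c_rpow_inner (c * (2 * q)) (q - 1) hS
  have hB : HasFDerivAt (fun y : EuclideanSpace ℝ (Fin d) => y j)
      (EuclideanSpace.proj j : EuclideanSpace ℝ (Fin d) →L[ℝ] ℝ) x :=
    (EuclideanSpace.proj j : EuclideanSpace ℝ (Fin d) →L[ℝ] ℝ).hasFDerivAt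
  have hAB := hA.mul hB
  rw [HasFDerivAt.fderiv (f := fun y : EuclideanSpace ℝ (Fin d) => (c * (2 * q)) * ⟪y, y⟫ ^ (q - 1) * y j) hAB]
  simp only [ContinuousLinearMap.add_apply, ContinuousLinearMap.smul_apply,
    innerSL_apply_apply, EuclideanSpace.inner_single_right, Matrix.add_apply, Matrix.smul_apply,
    Matrix.one_apply, vecMulVec, Matrix.of_apply, smul_eq_mul, PiLp.proj_apply,
    EuclideanSpace.single_apply]
  by_cases h : i = j
  · subst h; simp; ring
  · simp [h, Ne.symm h]; ring

end helpers

/-- The function `u(x) = −((d+1)/(2d)) β |x|^{2d/(d+1)}` is smooth away from the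
origin and satisfies `⟨Du, cof(−D²u) Du⟩ = β^{d+1}` there. -/
theorem radial_power_solution {d : ℕ} (hd : 1 ≤ d) (β : ℝ) (hβ : 0 < β) :
    ContDiffOn ℝ (⊤ : ℕ∞)
        (fun x : EuclideanSpace ℝ (Fin d) =>
          -(((d : ℝ) + 1) / (2 * d)) * β * ‖x‖ ^ ((2 * (d : ℝ)) / (d + 1)))
        {x | x ≠ 0} ∧
      ∀ x : EuclideanSpace ℝ (Fin d), x ≠ 0 →
        (gradVec (fun y : EuclideanSpace ℝ (Fin d) =>
            -(((d : ℝ) + 1) / (2 * d)) * β * ‖y‖ ^ ((2 * (d : ℝ)) / (d + 1))) x) ⬝ᵥ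
          (cof (-(hessMat (fun y : EuclideanSpace ℝ (Fin d) =>
              -(((d : ℝ) + 1) / (2 * d)) * β * ‖y‖ ^ ((2 * (d : ℝ)) / (d + 1))) x)) *ᵥ
            gradVec (fun y : EuclideanSpace ℝ (Fin d) =>
              -(((d : ℝ) + 1) / (2 * d)) * β * ‖y‖ ^ ((2 * (d : ℝ)) / (d + 1))) x) =
          β ^ (d + 1) := by
  obtain ⟨n, rfl⟩ : ∃ n, d = n + 1 := ⟨d - 1, (Nat.succ_pred_eq_of_pos hd).symm⟩
  have hN : ((n + 1 : ℕ) : ℝ) = (n : ℝ) + 1 := by push_cast; ring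
  have hN0 : ((n + 1 : ℕ) : ℝ) ≠ 0 := by positivity
  have hN10 : ((n + 1 : ℕ) : ℝ) + 1 ≠ 0 := by positivity
  set C : ℝ := -((((n + 1 : ℕ) : ℝ) + 1) / (2 * ((n + 1 : ℕ) : ℝ))) * β with hC
  set q : ℝ := ((n + 1 : ℕ) : ℝ) / (((n + 1 : ℕ) : ℝ) + 1) with hq
  have hfun : (fun x : EuclideanSpace ℝ (Fin (n + 1)) =>
      C * ‖x‖ ^ ((2 * ((n + 1 : ℕ) : ℝ)) / (((n + 1 : ℕ) : ℝ) + 1)))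
      = fun x : EuclideanSpace ℝ (Fin (n + 1)) => C * ⟪x, x⟫ ^ q := by
    funext x
    have h1 : (2 * ((n + 1 : ℕ) : ℝ)) / (((n + 1 : ℕ) : ℝ) + 1) = 2 * q := by
      rw [hq]; ring
    have h2 : ‖x‖ ^ ((2 : ℝ) * q) = (⟪x, x⟫ : ℝ) ^ q := by
      rw [Real.rpow_mul (norm_nonneg x)]
      congr 1
      rw [real_inner_self_eq_norm_sq x, ← Real.rpow_natCast ‖x‖ 2]
      norm_num
    rw [h1, h2]
  rw [hfun]
  have hCq : C * (2 * q) = -β := by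
    rw [hC, hq]; field_simp
  constructor
  · intro x hx
    have hS : (⟪x, x⟫ : ℝ) ≠ 0 := inner_self_ne_zero.mpr hx
    have hinner : ContDiffAt ℝ (⊤ : ℕ∞) (fun y : EuclideanSpace ℝ (Fin (n + 1)) => (⟪y, y⟫ : ℝ)) x :=
      contDiffAt_id.inner ℝ contDiffAt_id
    have hr : ContDiffAt ℝ (⊤ : ℕ∞) (fun y : EuclideanSpace ℝ (Fin (n + 1)) => (⟪y, y⟫ : ℝ) ^ q) x :=
      ContDiffAt.comp (g := fun t : ℝ => t ^ q)
        (f := fun y : EuclideanSpace ℝ (Fin (n + 1)) => (⟪y, y⟫ : ℝ)) x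
        (Real.contDiffAt_rpow_const_of_ne hS) hinner
    exact (contDiffAt_const.mul hr).contDiffWithinAt
  · intro x hx
    have hS0 : (0 : ℝ) < ⟪x, x⟫ := by
      rw [real_inner_self_eq_norm_sq]
      exact pow_pos (norm_pos_iff.mpr hx) 2
    have hS : (⟪x, x⟫ : ℝ) ≠ 0 := ne_of_gt hS0
    have hdot : (fun i => x i) ⬝ᵥ (fun i => x i) = (⟪x, x⟫ : ℝ) := by
      simp [dotProduct, PiLp.inner_apply, RCLike.inner_apply, conj_trivial]
      rw [EuclideanSpace.norm_sq_eq]; simp [sq]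
    rw [gradVec_c_rpow C q hx, hessMat_c_rpow C q hx]
    have e1 : C * (2 * q * ⟪x, x⟫ ^ (q - 1)) = -(β * ⟪x, x⟫ ^ (q - 1)) := by
      linear_combination (⟪x, x⟫ ^ (q - 1)) * hCq
    have e2 : (C * (2 * q)) * (2 * (q - 1) * ⟪x, x⟫ ^ (q - 1 - 1))
        = -(2 * β * (q - 1) * ⟪x, x⟫ ^ (q - 1 - 1)) := by
      linear_combination (2 * (q - 1) * ⟪x, x⟫ ^ (q - 1 - 1)) * hCq
    rw [e1, e2]
    have e3 : -((-(β * ⟪x, x⟫ ^ (q - 1))) • (1 : Matrix (Fin (n + 1)) (Fin (n + 1)) ℝ)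
          + (-(2 * β * (q - 1) * ⟪x, x⟫ ^ (q - 1 - 1))) • vecMulVec (fun i => x i) (fun i => x i))
        = (β * ⟪x, x⟫ ^ (q - 1)) • (1 : Matrix (Fin (n + 1)) (Fin (n + 1)) ℝ)
          + (2 * β * (q - 1) * ⟪x, x⟫ ^ (q - 1 - 1)) • vecMulVec (fun i => x i) (fun i => x i) := by
      rw [neg_add, neg_smul, neg_smul, neg_neg, neg_neg]
    rw [e3]
    set M : Matrix (Fin (n + 1)) (Fin (n + 1)) ℝ :=
      (β * ⟪x, x⟫ ^ (q - 1)) • (1 : Matrix (Fin (n + 1)) (Fin (n + 1)) ℝ)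
        + (2 * β * (q - 1) * ⟪x, x⟫ ^ (q - 1 - 1)) • vecMulVec (fun i => x i) (fun i => x i)
      with hM
    have hsymM : Mᵀ = M := by
      rw [hM, transpose_add, transpose_smul, transpose_smul, transpose_one]
      congr 1
      congr 1
      ext i j
      simp [vecMulVec, mul_comm]
    have hcof : cof M = adjugate M := by
      rw [cof, adjugate_transpose, hsymM]
    rw [hcof]
    have hane : β * (⟪x, x⟫ : ℝ) ^ (q - 1) ≠ 0 :=
      mul_ne_zero hβ.ne' (Real.rpow_pos_of_pos hS0 _).ne'
    have hmu : 1 ≤ n → β * (⟪x, x⟫ : ℝ) ^ (q - 1)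
        + (2 * β * (q - 1) * ⟪x, x⟫ ^ (q - 1 - 1)) * ((fun i => x i) ⬝ᵥ (fun i => x i)) ≠ 0 := by
      intro hn
      rw [hdot]
      have hp : (⟪x, x⟫ : ℝ) ^ (q - 1 - 1) * ⟪x, x⟫ = ⟪x, x⟫ ^ (q - 1) := by
        rw [← Real.rpow_add_one hS (q - 1 - 1)]
        congr 1; ring
      have heq : β * (⟪x, x⟫ : ℝ) ^ (q - 1)
          + (2 * β * (q - 1) * ⟪x, x⟫ ^ (q - 1 - 1)) * ⟪x, x⟫
          = β * ⟪x, x⟫ ^ (q - 1) * (2 * q - 1) := by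
        linear_combination (2 * β * (q - 1)) * hp
      rw [heq]
      have h2q : 0 < 2 * q - 1 := by
        have hq2 : 2 * q = (2 * ((n + 1 : ℕ) : ℝ)) / (((n + 1 : ℕ) : ℝ) + 1) := by
          rw [hq]; ring
        have hn' : (1 : ℝ) ≤ (n : ℝ) := by exact_mod_cast hn
        have : (1 : ℝ) < (2 * ((n + 1 : ℕ) : ℝ)) / (((n + 1 : ℕ) : ℝ) + 1) := by
          rw [one_lt_div (by positivity)]
          rw [hN]; linarith
        linarith [hq2 ▸ this]
      exact ne_of_gt (by positivity)
    have hadj := adj_rank_one (β * (⟪x, x⟫ : ℝ) ^ (q - 1))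
      (2 * β * (q - 1) * ⟪x, x⟫ ^ (q - 1 - 1)) hane (fun i => x i) hmu
    have hgv : (fun i => -(β * (⟪x, x⟫ : ℝ) ^ (q - 1)) * x i)
        = (-(β * (⟪x, x⟫ : ℝ) ^ (q - 1))) • (fun i => x i) := rfl
    rw [hgv, mulVec_smul, hM, hadj, smul_dotProduct, dotProduct_smul, dotProduct_smul, hdot]
    have hexp : ((⟪x, x⟫ : ℝ) ^ (q - 1)) ^ (n + 1 + 1) = ⟪x, x⟫⁻¹ := by
      rw [← Real.rpow_natCast ((⟪x, x⟫ : ℝ) ^ (q - 1)) (n + 1 + 1), ← Real.rpow_mul hS0.le]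
      rw [show (q - 1) * ((n + 1 + 1 : ℕ) : ℝ) = -1 by
        rw [hq]; push_cast; field_simp; ring]
      exact Real.rpow_neg_one _
    have : (-(β * (⟪x, x⟫ : ℝ) ^ (q - 1))) • ((-(β * (⟪x, x⟫ : ℝ) ^ (q - 1)))
        • ((β * (⟪x, x⟫ : ℝ) ^ (q - 1)) ^ n • (⟪x, x⟫ : ℝ)))
        = (β * (⟪x, x⟫ : ℝ) ^ (q - 1)) ^ (n + 1 + 1) * ⟪x, x⟫ := by
      simp only [smul_eq_mul]; ring
    rw [this, mul_pow, hexp, mul_assoc, inv_mul_cancel₀ hS, mul_one]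
end

section
/- Let f : [0,∞) → [0,∞) be continuous with f(r) = 0 for r ≥ R, and define h(x) = ∫_{|x|}^{∞} r^{(d−1)/(d+1)} f(r)^{2/(d+1)} dr on ℝ^d. If f is C¹ and positive on (0,R), then at every x with 0 < |x| < R, h is C² and satisfies ⟨Dh(x), cof(−D²h(x)) Dh(x)⟩ = f(|x|)². -/
/-!
Write `h(y) = v(|y|)` with `v' = -g` and `r = |x|`. Then `Dh(x) = -(g/r) x` and
`-D²h(x) = β I + γ x xᵀ` with `β = g/r` and some `γ` involving `g'`. Since `x` is an eigenvector of
`adj(β I + γ x xᵀ)` with eigenvalue `β^(d-1)` for every `γ`, the second-order information drops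
out: `⟨Dh, cof(-D²h) Dh⟩ = β^(d+1) r² = g^(d+1) / r^(d-1)`, which is `f(r)²` for
`g = r^((d-1)/(d+1)) f^(2/(d+1))`. Regularity of `h` is the fundamental theorem of calculus,
`g` being `C¹` where `f` is positive.
-/

open Matrix

open MeasureTheory Set
open Filter Topology

section Integral

variable {E : Type*} [NormedAddCommGroup E]

theorem hasDerivAt_integral_Ioi [NormedSpace ℝ E] [CompleteSpace E] {g : ℝ → E} {a t : ℝ}
    (hg : IntegrableOn g (Ioi a)) (hat : a < t) (hgt : ContinuousAt g t) :
    HasDerivAt (fun s => ∫ r in Ioi s, g r) (-g t) t := by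
  have hftc : HasDerivAt (fun s => ∫ r in a..s, g r) (g t) t :=
    intervalIntegral.integral_hasDerivAt_right
      ((intervalIntegrable_iff_integrableOn_Ioc_of_le hat.le).mpr
        (hg.mono_set Ioc_subset_Ioi_self))
      (AEStronglyMeasurable.stronglyMeasurableAtFilter_of_mem hg.aestronglyMeasurable
        (Ioi_mem_nhds hat)) hgt
  refine (hftc.const_sub (∫ r in Ioi a, g r)).congr_of_eventuallyEq ?_
  filter_upwards [Ioi_mem_nhds hat] with s hs
  rw [← intervalIntegral.integral_Ioi_sub_Ioi hg (le_of_lt hs)]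
  exact (sub_sub_cancel _ _).symm

theorem integrableOn_Ioi_of_continuousOn_Icc_of_eq_zero {g : ℝ → E} {a R : ℝ}
    (hg : ContinuousOn g (Icc a R)) (hgR : ∀ r, R < r → g r = 0) : IntegrableOn g (Ioi a) := by
  refine (hg.integrableOn_Icc.union
    (integrableOn_zero.congr_fun (fun r hr => (hgR r hr).symm) measurableSet_Ioi)).mono_set ?_
  intro r hr
  rcases le_or_gt r R with hrR | hrR
  exacts [Or.inl ⟨le_of_lt hr, hrR⟩, Or.inr hrR]

end Integral

theorem contDiffAt_succ_of_eventually_hasDerivAt {𝕜 F : Type*} [NontriviallyNormedField 𝕜]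
    [NormedAddCommGroup F] [NormedSpace 𝕜 F] {f f' : 𝕜 → F} {x : 𝕜} {n : ℕ}
    (hf : ∀ᶠ t in 𝓝 x, HasDerivAt f (f' t) t) (hf' : ContDiffAt 𝕜 n f' x) :
    ContDiffAt 𝕜 (n + 1) f x :=
  contDiffAt_succ_iff_hasFDerivAt.mpr
    ⟨fun t => (1 : 𝕜 →L[𝕜] 𝕜).smulRight (f' t), ⟨_, hf, fun _ ht => ht.hasFDerivAt⟩,
      (ContinuousLinearMap.smulRightL 𝕜 𝕜 F 1).contDiff.contDiffAt.comp x hf'⟩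

theorem adjugate_one_add_vecMulVec_mulVec {ι : Type*} [Fintype ι] [DecidableEq ι]
    (u w : ι → ℝ) : adjugate (1 + vecMulVec u w) *ᵥ u = u := by
  set s := w ⬝ᵥ u
  -- `u` is an eigenvector of `1 + t u wᵀ` for the eigenvalue `1 + t s`, which is also its
  -- determinant; `adj M * M = det M • 1` then forces `adj M u = u` unless `1 + t s = 0`.
  have eigen : ∀ t : ℝ, 1 + t * s ≠ 0 → adjugate (1 + vecMulVec u (t • w)) *ᵥ u = u := by
    intro t ht
    have hdet : (1 + vecMulVec u (t • w)).det = 1 + t * s := by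
      rw [vecMulVec_eq Unit, det_one_add_replicateCol_mul_replicateRow, smul_dotProduct,
        smul_eq_mul]
    have hMu : (1 + vecMulVec u (t • w)) *ᵥ u = (1 + t * s) • u := by
      rw [add_mulVec, one_mulVec, vecMulVec_mulVec, op_smul_eq_smul, smul_dotProduct,
        smul_eq_mul, add_smul, one_smul]
    have h := congrArg (adjugate (1 + vecMulVec u (t • w)) *ᵥ ·) hMu
    simp only [mulVec_mulVec, adjugate_mul, smul_mulVec, one_mulVec, mulVec_smul, hdet] at h
    exact smul_right_injective _ ht h.symm
  have hdense : Dense {t : ℝ | 1 + t * s ≠ 0} := by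
    refine Dense.mono (fun t ht h => ?_) (dense_compl_singleton (-s⁻¹))
    have hs : s ≠ 0 := by rintro hs; simp [hs] at h
    refine ht (mem_singleton_iff.mpr ?_)
    field_simp
    linarith
  have hcont : Continuous fun t : ℝ => adjugate (1 + vecMulVec u (t • w)) *ᵥ u := by
    fun_prop
  simpa using congrFun (hcont.ext_on hdense continuous_const eigen) 1

theorem cof_smul_one_add_smul_vecMulVec_mulVec {d : ℕ} {β : ℝ} (hβ : β ≠ 0) (γ : ℝ)
    (x : Fin d → ℝ) : cof (β • 1 + γ • vecMulVec x x) *ᵥ x = β ^ (d - 1) • x := by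
  have hA : β • 1 + γ • vecMulVec x x = β • (1 + vecMulVec x ((γ / β) • x)) := by
    rw [vecMulVec_smul, smul_add, smul_smul, mul_div_cancel₀ _ hβ]
  have hsymm : (β • 1 + γ • vecMulVec x x)ᵀ = β • 1 + γ • vecMulVec x x := by
    rw [transpose_add, transpose_smul, transpose_smul, transpose_one, transpose_vecMulVec]
  rw [cof, adjugate_transpose, hsymm, hA, adjugate_smul, Fintype.card_fin, smul_mulVec,
    adjugate_one_add_vecMulVec_mulVec]

theorem hasFDerivAt_norm_of_ne_zero {E : Type*} [NormedAddCommGroup E] [InnerProductSpace ℝ E]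
    {x : E} (hx : x ≠ 0) : HasFDerivAt (fun y : E => ‖y‖) (‖x‖⁻¹ • innerSL ℝ x) x := by
  have h := (hasStrictFDerivAt_norm_sq x).hasFDerivAt.sqrt (by positivity)
  simp only [Real.sqrt_sq (norm_nonneg _)] at h
  convert h using 1
  ext y
  simp only [_root_.smul_apply, coe_innerSL_apply, smul_eq_mul, nsmul_eq_mul, Nat.cast_ofNat]
  field_simp

section Radial

variable {d : ℕ} {v : ℝ → ℝ} {x : EuclideanSpace ℝ (Fin d)}

theorem fderiv_radial_apply_single {v' : ℝ} (hx : x ≠ 0) (hv : HasDerivAt v v' ‖x‖) (j : Fin d) :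
    fderiv ℝ (fun y => v ‖y‖) x (EuclideanSpace.single j 1) = v' / ‖x‖ * x j := by
  have h : HasFDerivAt (fun y => v ‖y‖) (v' • ‖x‖⁻¹ • innerSL ℝ x) x :=
    hv.comp_hasFDerivAt x (hasFDerivAt_norm_of_ne_zero hx)
  rw [h.fderiv]
  simp only [_root_.smul_apply, coe_innerSL_apply, EuclideanSpace.inner_single_right,
    Real.ringHom_apply, one_mul, smul_eq_mul]
  ring

theorem gradVec_radial {v' : ℝ} (hx : x ≠ 0) (hv : HasDerivAt v v' ‖x‖) :
    gradVec (fun y => v ‖y‖) x = (v' / ‖x‖) • WithLp.ofLp x :=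
  funext (fderiv_radial_apply_single hx hv)

theorem hessMat_radial {v' : ℝ → ℝ} {c : ℝ} (hx : x ≠ 0)
    (hv : ∀ᶠ t in 𝓝 ‖x‖, HasDerivAt v (v' t) t) (hψ : HasDerivAt (fun t => v' t / t) c ‖x‖) :
    hessMat (fun y => v ‖y‖) x =
      (v' ‖x‖ / ‖x‖) • 1 + (c / ‖x‖) • vecMulVec (WithLp.ofLp x) (WithLp.ofLp x) := by
  have hnear : ∀ᶠ y in 𝓝 x, y ≠ 0 ∧ HasDerivAt v (v' ‖y‖) ‖y‖ :=
    (eventually_ne_nhds hx).and (continuous_norm.continuousAt.eventually hv)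
  ext i j
  have hpartial : (fun y => fderiv ℝ (fun z => v ‖z‖) y (EuclideanSpace.single j 1)) =ᶠ[𝓝 x]
      fun y => v' ‖y‖ / ‖y‖ * y j :=
    hnear.mono fun y hy => fderiv_radial_apply_single hy.1 hy.2 j
  have hψx : HasFDerivAt (fun y => v' ‖y‖ / ‖y‖ * y j)
      ((v' ‖x‖ / ‖x‖) • EuclideanSpace.proj j + x j • c • ‖x‖⁻¹ • innerSL ℝ x) x :=
    (hψ.comp_hasFDerivAt x (hasFDerivAt_norm_of_ne_zero hx)).mul
      (EuclideanSpace.proj (𝕜 := ℝ) j).hasFDerivAt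
  rw [hessMat, of_apply, hpartial.fderiv_eq, hψx.fderiv]
  simp only [_root_.add_apply, _root_.smul_apply, PiLp.proj_apply, PiLp.single_apply,
    coe_innerSL_apply, EuclideanSpace.inner_single_right, Real.ringHom_apply, Matrix.add_apply,
    Matrix.smul_apply, one_apply, vecMulVec_apply, smul_eq_mul, eq_comm (a := j)]
  split_ifs <;> ring

theorem dotProduct_ofLp_self (y : EuclideanSpace ℝ (Fin d)) :
    WithLp.ofLp y ⬝ᵥ WithLp.ofLp y = ‖y‖ ^ 2 := by
  rw [← real_inner_self_eq_norm_sq, EuclideanSpace.inner_eq_star_dotProduct, star_trivial]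

theorem gradVec_dotProduct_cof_neg_hessMat_mulVec_radial {v' : ℝ → ℝ} {c : ℝ} (hx : x ≠ 0)
    (hv : ∀ᶠ t in 𝓝 ‖x‖, HasDerivAt v (v' t) t) (hψ : HasDerivAt (fun t => v' t / t) c ‖x‖)
    (hv' : v' ‖x‖ ≠ 0) :
    gradVec (fun y => v ‖y‖) x ⬝ᵥ
        (cof (-hessMat (fun y => v ‖y‖) x) *ᵥ gradVec (fun y => v ‖y‖) x) =
      (-v' ‖x‖) ^ (d + 1) / ‖x‖ ^ (d - 1) := by
  obtain ⟨n, rfl⟩ : ∃ n, d = n + 1 := by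
    refine Nat.exists_eq_add_one.mpr (Nat.pos_of_ne_zero ?_)
    rintro rfl
    exact hx (Subsingleton.elim _ _)
  have hr : ‖x‖ ≠ 0 := norm_ne_zero_iff.mpr hx
  have hneg : -hessMat (fun y => v ‖y‖) x =
      (-v' ‖x‖ / ‖x‖) • 1 + (-c / ‖x‖) • vecMulVec (WithLp.ofLp x) (WithLp.ofLp x) := by
    rw [hessMat_radial hx hv hψ, neg_add, ← neg_smul, ← neg_smul, neg_div, neg_div]
  rw [gradVec_radial hx hv.self_of_nhds, hneg, mulVec_smul,
    cof_smul_one_add_smul_vecMulVec_mulVec (by simpa [neg_div] using div_ne_zero hv' hr),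
    smul_dotProduct, dotProduct_smul, dotProduct_smul, dotProduct_ofLp_self]
  simp only [smul_eq_mul, Nat.add_sub_cancel, div_pow]
  field_simp
  ring

end Radial

noncomputable def radialIntegrand (d : ℕ) (f : ℝ → ℝ) (r : ℝ) : ℝ :=
  r ^ (((d : ℝ) - 1) / (d + 1)) * f r ^ ((2 : ℝ) / (d + 1))

section RadialIntegrand

variable {d : ℕ} {f : ℝ → ℝ} {r : ℝ}

theorem radialIntegrand_pos (hr : 0 < r) (hf : 0 < f r) : 0 < radialIntegrand d f r := by
  unfold radialIntegrand
  positivity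

theorem radialIntegrand_eq_zero (hf : f r = 0) : radialIntegrand d f r = 0 := by
  rw [radialIntegrand, hf, Real.zero_rpow (by positivity), mul_zero]

-- This identity is what the exponents `(d - 1)/(d + 1)` and `2/(d + 1)` are chosen for.
theorem radialIntegrand_pow_succ (hd : 1 ≤ d) (hr : 0 ≤ r) (hf : 0 ≤ f r) :
    radialIntegrand d f r ^ (d + 1) = r ^ (d - 1) * f r ^ 2 := by
  have hd' : ((d - 1 : ℕ) : ℝ) = (d : ℝ) - 1 := by push_cast [Nat.cast_sub hd]; ring
  rw [radialIntegrand, mul_pow, ← Real.rpow_mul_natCast hr, ← Real.rpow_mul_natCast hf,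
    ← Real.rpow_natCast, ← Real.rpow_ofNat (f r) 2, hd']
  congr 2 <;> push_cast <;> field_simp

theorem ContinuousOn.radialIntegrand (hf : ContinuousOn f (Ioi 0)) :
    ContinuousOn (radialIntegrand d f) (Ioi 0) :=
  (continuousOn_id.rpow_const fun t ht => Or.inl (ne_of_gt ht)).mul
    (hf.rpow_const fun _ _ => Or.inr (by positivity))

theorem ContDiffAt.radialIntegrand {n : WithTop ℕ∞} (hf : ContDiffAt ℝ n f r) (hr : 0 < r)
    (hfr : 0 < f r) : ContDiffAt ℝ n (radialIntegrand d f) r :=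
  (contDiffAt_id.rpow_const_of_ne hr.ne').mul (hf.rpow_const_of_ne hfr.ne')

end RadialIntegrand

theorem radial_solution_formula_general {d : ℕ} (hd : 1 ≤ d) (R : ℝ)
    (f : ℝ → ℝ) (hfc : ContinuousOn f (Ici 0))
    (hfR : ∀ r, R ≤ r → f r = 0)
    (hfC1 : ContDiffOn ℝ 1 f (Ioo 0 R)) (hfpos : ∀ r ∈ Ioo 0 R, 0 < f r) :
    ∀ x : EuclideanSpace ℝ (Fin d), 0 < ‖x‖ → ‖x‖ < R →
      ContDiffAt ℝ 2
          (fun y : EuclideanSpace ℝ (Fin d) =>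
            ∫ r in Ioi ‖y‖, r ^ (((d : ℝ) - 1) / (d + 1)) * f r ^ ((2 : ℝ) / (d + 1))) x ∧
        (gradVec (fun y : EuclideanSpace ℝ (Fin d) =>
            ∫ r in Ioi ‖y‖, r ^ (((d : ℝ) - 1) / (d + 1)) * f r ^ ((2 : ℝ) / (d + 1))) x) ⬝ᵥ
          (cof (-(hessMat (fun y : EuclideanSpace ℝ (Fin d) =>
              ∫ r in Ioi ‖y‖, r ^ (((d : ℝ) - 1) / (d + 1)) * f r ^ ((2 : ℝ) / (d + 1))) x)) *ᵥ
            gradVec (fun y : EuclideanSpace ℝ (Fin d) =>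
              ∫ r in Ioi ‖y‖, r ^ (((d : ℝ) - 1) / (d + 1)) * f r ^ ((2 : ℝ) / (d + 1))) x) =
          f ‖x‖ ^ 2 := by
  intro x hx0 hxR
  set g := radialIntegrand d f
  set v : ℝ → ℝ := fun t => ∫ r in Ioi t, g r
  change ContDiffAt ℝ 2 (fun y => v ‖y‖) x ∧ gradVec (fun y => v ‖y‖) x ⬝ᵥ
    (cof (-hessMat (fun y => v ‖y‖) x) *ᵥ gradVec (fun y => v ‖y‖) x) = f ‖x‖ ^ 2
  have hx : x ≠ 0 := norm_pos_iff.mp hx0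
  have hfx : 0 < f ‖x‖ := hfpos _ ⟨hx0, hxR⟩
  have hg_cont : ContinuousOn g (Ioi 0) := (hfc.mono Ioi_subset_Ici_self).radialIntegrand
  have hv : ∀ᶠ t in 𝓝 ‖x‖, HasDerivAt v (-g t) t := by
    filter_upwards [Ioi_mem_nhds hx0] with t ht
    refine hasDerivAt_integral_Ioi ?_ (half_lt_self ht) (hg_cont.continuousAt (Ioi_mem_nhds ht))
    exact integrableOn_Ioi_of_continuousOn_Icc_of_eq_zero (R := R)
      (hg_cont.mono fun r hr => (half_pos ht).trans_le hr.1)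
      fun r hr => radialIntegrand_eq_zero (hfR r hr.le)
  have hg_C1 : ContDiffAt ℝ 1 g ‖x‖ :=
    (hfC1.contDiffAt (Ioo_mem_nhds hx0 hxR)).radialIntegrand hx0 hfx
  refine ⟨(contDiffAt_succ_of_eventually_hasDerivAt hv hg_C1.neg).comp x (contDiffAt_norm ℝ hx), ?_⟩
  obtain ⟨c, hc⟩ : ∃ c, HasDerivAt (fun t => -g t / t) c ‖x‖ :=
    ⟨_, ((hg_C1.neg.div contDiffAt_id hx0.ne').differentiableAt one_ne_zero).hasDerivAt⟩
  have hg_ne : -g ‖x‖ ≠ 0 := neg_ne_zero.mpr (radialIntegrand_pos hx0 hfx).ne'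
  rw [gradVec_dotProduct_cof_neg_hessMat_mulVec_radial hx hv hc hg_ne, neg_neg,
    radialIntegrand_pow_succ hd hx0.le hfx.le]
  field_simp

/-- The radial solution formula: with
`h(x) = ∫_{|x|}^∞ r^{(d−1)/(d+1)} f(r)^{2/(d+1)} dr` for a continuous compactly
supported density profile `f ≥ 0` which is `C¹` and positive on `(0,R)`, the function
`h` is `C²` at every `x` with `0 < |x| < R` and satisfies
`⟨Dh(x), cof(−D²h(x)) Dh(x)⟩ = f(|x|)²` there. -/
theorem radial_solution_formula {d : ℕ} (hd : 1 ≤ d) (R : ℝ) (hR : 0 < R)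
    (f : ℝ → ℝ) (hfc : ContinuousOn f (Ici 0)) (hf0 : ∀ r, 0 ≤ f r)
    (hfR : ∀ r, R ≤ r → f r = 0)
    (hfC1 : ContDiffOn ℝ 1 f (Ioo 0 R)) (hfpos : ∀ r ∈ Ioo 0 R, 0 < f r) :
    ∀ x : EuclideanSpace ℝ (Fin d), 0 < ‖x‖ → ‖x‖ < R →
      ContDiffAt ℝ 2
          (fun y : EuclideanSpace ℝ (Fin d) =>
            ∫ r in Ioi ‖y‖, r ^ (((d : ℝ) - 1) / (d + 1)) * f r ^ ((2 : ℝ) / (d + 1))) x ∧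
        (gradVec (fun y : EuclideanSpace ℝ (Fin d) =>
            ∫ r in Ioi ‖y‖, r ^ (((d : ℝ) - 1) / (d + 1)) * f r ^ ((2 : ℝ) / (d + 1))) x) ⬝ᵥ
          (cof (-(hessMat (fun y : EuclideanSpace ℝ (Fin d) =>
              ∫ r in Ioi ‖y‖, r ^ (((d : ℝ) - 1) / (d + 1)) * f r ^ ((2 : ℝ) / (d + 1))) x)) *ᵥ
            gradVec (fun y : EuclideanSpace ℝ (Fin d) =>
              ∫ r in Ioi ‖y‖, r ^ (((d : ℝ) - 1) / (d + 1)) * f r ^ ((2 : ℝ) / (d + 1))) x) =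
          f ‖x‖ ^ 2 :=
  radial_solution_formula_general hd R f hfc hfR hfC1 hfpos
end

section
/- Let d ≥ 1 and h(x) = ((d+1)/(2d)) |B₁|^{−2/(d+1)} (1 − |x|^{2d/(d+1)}) on the closed unit ball of ℝ^d, where |B₁| is the volume of the unit ball. Then h = 0 on the unit sphere, h is smooth on B₁ \ {0}, and ⟨Dh(x), cof(−D²h(x)) Dh(x)⟩ = |B₁|^{−2} for all x with 0 < |x| < 1. -/
open Matrix

open MeasureTheory Metric

noncomputable def gsq {d : ℕ} (y : EuclideanSpace ℝ (Fin d)) : ℝ := ∑ i, (y i)^2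

noncomputable def gsqD {d : ℕ} (x : EuclideanSpace ℝ (Fin d)) :
    EuclideanSpace ℝ (Fin d) →L[ℝ] ℝ :=
  ∑ i, (2 * x i) • (EuclideanSpace.proj i : EuclideanSpace ℝ (Fin d) →L[ℝ] ℝ)

lemma gsq_eq {d : ℕ} (y : EuclideanSpace ℝ (Fin d)) : gsq y = ‖y‖ ^ 2 := by
  rw [EuclideanSpace.norm_eq, Real.sq_sqrt (by positivity)]
  simp [gsq, Real.norm_eq_abs, sq_abs]

lemma gsq_pos {d : ℕ} {x : EuclideanSpace ℝ (Fin d)} (hx : x ≠ 0) : 0 < gsq x := by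
  have h : 0 < ‖x‖ := norm_pos_iff.2 hx
  rw [gsq_eq]; positivity

lemma hasFDerivAt_gsq {d : ℕ} (x : EuclideanSpace ℝ (Fin d)) :
    HasFDerivAt gsq (gsqD x) x := by
  have : HasFDerivAt (fun y : EuclideanSpace ℝ (Fin d) => ∑ i, (y i)^2) (gsqD x) x := by
    apply HasFDerivAt.fun_sum
    intro i _
    have hp : HasFDerivAt (⇑(EuclideanSpace.proj (𝕜 := ℝ) i))
        (EuclideanSpace.proj i : EuclideanSpace ℝ (Fin d) →L[ℝ] ℝ) x := by
      exact ContinuousLinearMap.hasFDerivAt _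
    have := hp.mul hp
    refine (this.congr_of_eventuallyEq (Filter.Eventually.of_forall fun y => by simp [sq])).congr_fderiv ?_
    ext v
    simp [two_mul, add_mul]
  exact this

lemma gsqD_apply {d : ℕ} (x : EuclideanSpace ℝ (Fin d)) (i : Fin d) :
    gsqD x (EuclideanSpace.single i 1) = 2 * x i := by
  simp [gsqD, ContinuousLinearMap.sum_apply, EuclideanSpace.single_apply]

lemma hasFDerivAt_hfun {d : ℕ} (c p : ℝ) {x : EuclideanSpace ℝ (Fin d)} (hx : x ≠ 0) :
    HasFDerivAt (fun y => c * (1 - gsq y ^ p))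
      ((-(c * (p * gsq x ^ (p - 1)))) • gsqD x) x := by
  have h1 := (hasFDerivAt_gsq x).rpow_const (p := p) (Or.inl (ne_of_gt (gsq_pos hx)))
  have h2 := (h1.const_sub 1).const_mul c
  rw [smul_neg, smul_smul, ← neg_smul] at h2; exact h2

lemma gradVec_hfun {d : ℕ} (c p : ℝ) {x : EuclideanSpace ℝ (Fin d)} (hx : x ≠ 0) :
    gradVec (fun y => c * (1 - gsq y ^ p)) x =
      fun i => -(2 * (c * p) * gsq x ^ (p - 1)) * x i := by
  funext i
  rw [gradVec, (hasFDerivAt_hfun c p hx).fderiv]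
  rw [ContinuousLinearMap.smul_apply, gsqD_apply, smul_eq_mul]
  ring

lemma hessMat_hfun {d : ℕ} (c p : ℝ) {x : EuclideanSpace ℝ (Fin d)} (hx : x ≠ 0) (i j : Fin d) :
    hessMat (fun y => c * (1 - gsq y ^ p)) x i j =
      -(2 * (c * p)) * ((p - 1) * gsq x ^ (p - 2) * (2 * x i) * x j
        + gsq x ^ (p - 1) * (if i = j then 1 else 0)) := by
  have hU : {y : EuclideanSpace ℝ (Fin d) | y ≠ 0} ∈ nhds x :=
    (isOpen_compl_singleton).mem_nhds hx
  have heq : (fun y => fderiv ℝ (fun z => c * (1 - gsq z ^ p)) y (EuclideanSpace.single j 1))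
      =ᶠ[nhds x] fun y => (-(c * p) * gsq y ^ (p - 1)) * (2 * y j) := by
    filter_upwards [hU] with y hy
    rw [(hasFDerivAt_hfun c p hy).fderiv, ContinuousLinearMap.smul_apply, gsqD_apply,
      smul_eq_mul]
    ring
  have hu : HasFDerivAt (fun y : EuclideanSpace ℝ (Fin d) => -(c * p) * gsq y ^ (p - 1))
      ((-(c * p)) • (((p - 1) * gsq x ^ (p - 1 - 1)) • gsqD x)) x :=
    (((hasFDerivAt_gsq x).rpow_const (p := p - 1)
      (Or.inl (ne_of_gt (gsq_pos hx)))).const_mul (-(c * p)))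
  have hv : HasFDerivAt (fun y : EuclideanSpace ℝ (Fin d) => 2 * y j)
      ((2 : ℝ) • (EuclideanSpace.proj j : EuclideanSpace ℝ (Fin d) →L[ℝ] ℝ)) x := by
    have hp : HasFDerivAt (⇑(EuclideanSpace.proj (𝕜 := ℝ) j))
        (EuclideanSpace.proj j : EuclideanSpace ℝ (Fin d) →L[ℝ] ℝ) x := by
      exact ContinuousLinearMap.hasFDerivAt _
    exact hp.const_mul (2:ℝ)
  have hm := hu.mul hv
  rw [hessMat, Matrix.of_apply, heq.fderiv_eq, show (fun y : EuclideanSpace ℝ (Fin d) => -(c * p) * gsq y ^ (p - 1) * (2 * y j)) = ((fun y => -(c * p) * gsq y ^ (p - 1)) * fun y => 2 * y j) from rfl, hm.fderiv]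
  simp only [ContinuousLinearMap.add_apply, ContinuousLinearMap.smul_apply, gsqD_apply,
    smul_eq_mul, PiLp.proj_apply, EuclideanSpace.single_apply]
  have : p - 1 - 1 = p - 2 := by ring
  rw [this]
  by_cases hij : i = j
  · subst hij; simp; ring
  · simp [hij, Ne.symm hij]; ring

lemma cof_mulVec_eig {d : ℕ} (a b : ℝ) (x : Fin d → ℝ) (ha : a ≠ 0)
    (hlam : a + b * (∑ i, x i ^ 2) ≠ 0 ∨ d = 1) :
    cof (Matrix.of fun i j => a * (if i = j then (1:ℝ) else 0) + b * (x i * x j)) *ᵥ x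
      = (a ^ (d - 1)) • x := by
  set S : ℝ := ∑ i, x i ^ 2 with hS
  set M : Matrix (Fin d) (Fin d) ℝ :=
    Matrix.of fun i j => a * (if i = j then (1:ℝ) else 0) + b * (x i * x j) with hM
  have hsymm : Mᵀ = M := by
    ext i j
    simp only [hM, Matrix.transpose_apply, Matrix.of_apply]
    by_cases h : i = j
    · subst h; ring
    · simp only [if_neg h, if_neg (Ne.symm h)]; ring
  have hcof : cof M = Matrix.adjugate M := by
    rw [cof, Matrix.adjugate_transpose, hsymm]
  rw [hcof]
  by_cases hd0 : d = 0
  · subst hd0; funext i; exact i.elim0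
  by_cases hd1 : d = 1
  · subst hd1
    rw [Matrix.adjugate_fin_one, Matrix.one_mulVec]
    simp
  · have hlam' : a + b * S ≠ 0 := hlam.resolve_right hd1
    have hMx : M *ᵥ x = (a + b * S) • x := by
      funext i
      have hterm : ∀ j, (a * (if i = j then (1:ℝ) else 0) + b * (x i * x j)) * x j
          = a * (if i = j then x j else 0) + b * x i * x j ^ 2 := by
        intro j; by_cases h : i = j <;> simp [h] <;> ring
      simp only [Matrix.mulVec, dotProduct, hM, Matrix.of_apply, hterm,
        Finset.sum_add_distrib, ← Finset.mul_sum, Pi.smul_apply, smul_eq_mul,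
        Finset.sum_ite_eq, Finset.mem_univ, if_true, ← hS]
      ring
    have hdet : M.det = a ^ (d - 1) * (a + b * S) := by
      have hMeq : M = a • (1 + Matrix.replicateCol (Fin 1) (fun i => (b / a) * x i)
          * Matrix.replicateRow (Fin 1) x) := by
        ext i j
        simp only [hM, Matrix.of_apply, Matrix.smul_apply, Matrix.add_apply,
          Matrix.mul_apply, Matrix.replicateCol_apply, Matrix.replicateRow_apply, Matrix.one_apply,
          Finset.univ_unique, Finset.sum_singleton, smul_eq_mul]
        by_cases h : i = j
        · subst h; field_simp
        · simp only [if_neg h, Matrix.one_apply_ne h]; field_simp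
      rw [hMeq, Matrix.det_smul]
      erw [Matrix.det_one_add_replicateCol_mul_replicateRow (ι := Fin 1) (fun i => (b / a) * x i) x]
      have hdot : (x ⬝ᵥ fun i => (b / a) * x i) = (b / a) * S := by
        simp only [dotProduct, hS, Finset.mul_sum]
        exact Finset.sum_congr rfl fun j _ => by ring
      rw [hdot, Fintype.card_fin]
      have hpow : a ^ d = a ^ (d - 1) * a := by
        rw [← pow_succ]; congr 1; omega
      rw [hpow]; field_simp
    have h2 : M.adjugate *ᵥ (M *ᵥ x) = M.det • x := by
      rw [Matrix.mulVec_mulVec, Matrix.adjugate_mul, Matrix.smul_mulVec,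
        Matrix.one_mulVec]
    rw [hMx, Matrix.mulVec_smul, hdet] at h2
    apply smul_right_injective (Fin d → ℝ) hlam'
    show (a + b * S) • (M.adjugate *ᵥ x) = (a + b * S) • a ^ (d - 1) • x
    rw [h2, smul_smul]
    congr 1
    ring


/-- The explicit solution for the uniform density on the unit ball:
`h(x) = ((d+1)/(2d)) |B₁|^{−2/(d+1)} (1 − |x|^{2d/(d+1)})` vanishes on the unit
sphere, is smooth on `B₁ \ {0}`, and satisfies
`⟨Dh, cof(−D²h) Dh⟩ = |B₁|^{−2}` for `0 < |x| < 1`. -/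
theorem unit_ball_solution {d : ℕ} (hd : 1 ≤ d) :
    (∀ x : EuclideanSpace ℝ (Fin d), ‖x‖ = 1 →
      (((d : ℝ) + 1) / (2 * d)) *
          ((volume (ball (0 : EuclideanSpace ℝ (Fin d)) 1)).toReal) ^ (-(2 : ℝ) / (d + 1)) *
          (1 - ‖x‖ ^ ((2 * (d : ℝ)) / (d + 1))) = 0) ∧
    ContDiffOn ℝ (⊤ : ℕ∞)
        (fun x : EuclideanSpace ℝ (Fin d) =>
          (((d : ℝ) + 1) / (2 * d)) *
            ((volume (ball (0 : EuclideanSpace ℝ (Fin d)) 1)).toReal) ^ (-(2 : ℝ) / (d + 1)) *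
            (1 - ‖x‖ ^ ((2 * (d : ℝ)) / (d + 1))))
        (ball 0 1 \ {0}) ∧
    ∀ x : EuclideanSpace ℝ (Fin d), 0 < ‖x‖ → ‖x‖ < 1 →
      (gradVec (fun y : EuclideanSpace ℝ (Fin d) =>
          (((d : ℝ) + 1) / (2 * d)) *
            ((volume (ball (0 : EuclideanSpace ℝ (Fin d)) 1)).toReal) ^ (-(2 : ℝ) / (d + 1)) *
            (1 - ‖y‖ ^ ((2 * (d : ℝ)) / (d + 1)))) x) ⬝ᵥ
        (cof (-(hessMat (fun y : EuclideanSpace ℝ (Fin d) =>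
            (((d : ℝ) + 1) / (2 * d)) *
              ((volume (ball (0 : EuclideanSpace ℝ (Fin d)) 1)).toReal) ^ (-(2 : ℝ) / (d + 1)) *
              (1 - ‖y‖ ^ ((2 * (d : ℝ)) / (d + 1)))) x)) *ᵥ
          gradVec (fun y : EuclideanSpace ℝ (Fin d) =>
            (((d : ℝ) + 1) / (2 * d)) *
              ((volume (ball (0 : EuclideanSpace ℝ (Fin d)) 1)).toReal) ^ (-(2 : ℝ) / (d + 1)) *
              (1 - ‖y‖ ^ ((2 * (d : ℝ)) / (d + 1)))) x) =
        ((volume (ball (0 : EuclideanSpace ℝ (Fin d)) 1)).toReal) ^ (-(2 : ℤ)) := by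
  have hdR : (1:ℝ) ≤ (d:ℝ) := by exact_mod_cast hd
  have hdne : (d:ℝ) ≠ 0 := by linarith
  have hd1ne : (d:ℝ) + 1 ≠ 0 := by linarith
  set V : ℝ := (volume (ball (0 : EuclideanSpace ℝ (Fin d)) 1)).toReal with hV
  have hVpos : 0 < V := ENNReal.toReal_pos (measure_ball_pos _ _ one_pos).ne'
    measure_ball_lt_top.ne
  set c : ℝ := (((d:ℝ) + 1) / (2 * d)) * V ^ (-(2:ℝ) / (d + 1)) with hc
  set p : ℝ := (d:ℝ) / ((d:ℝ) + 1) with hp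
  have hcpos : 0 < c := by
    apply mul_pos (div_pos (by linarith) (by linarith))
    exact Real.rpow_pos_of_pos hVpos _
  have hppos : 0 < p := div_pos (by linarith) (by linarith)
  have hfe : (fun y : EuclideanSpace ℝ (Fin d) =>
      c * (1 - ‖y‖ ^ ((2 * (d : ℝ)) / (d + 1)))) = fun y => c * (1 - gsq y ^ p) := by
    funext y
    have : ‖y‖ ^ ((2 * (d : ℝ)) / (d + 1)) = gsq y ^ p := by
      rw [gsq_eq, ← Real.rpow_natCast ‖y‖ 2, ← Real.rpow_mul (norm_nonneg y)]
      congr 1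
      rw [hp]
      push_cast
      rw [mul_div_assoc]
    rw [this]
  refine ⟨?_, ?_, ?_⟩
  · intro x hx
    rw [hx, Real.one_rpow]
    ring
  · intro x hx
    have hx0 : x ≠ 0 := by
      intro h; exact hx.2 (by simp [h])
    apply ContDiffAt.contDiffWithinAt
    have hn : ContDiffAt ℝ (⊤ : ℕ∞) (fun y : EuclideanSpace ℝ (Fin d) => ‖y‖) x :=
      contDiffAt_norm (𝕜 := ℝ) hx0
    have hr : ContDiffAt ℝ (⊤ : ℕ∞) (fun t : ℝ => t ^ ((2 * (d : ℝ)) / (d + 1))) ‖x‖ :=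
      Real.contDiffAt_rpow_const_of_ne (norm_pos_iff.2 hx0).ne'
    exact contDiffAt_const.mul (contDiffAt_const.sub (hr.comp x hn))
  · intro x hx0 hx1
    have hxne : x ≠ 0 := norm_pos_iff.1 hx0
    rw [hfe]
    have hg := gsq_pos hxne
    set g : ℝ := gsq x with hgdef
    set a : ℝ := 2 * (c * p) * g ^ (p - 1) with ha
    set b : ℝ := 2 * (c * p) * ((p - 1) * g ^ (p - 2) * 2) with hb
    have hgp1 : (0:ℝ) < g ^ (p - 1) := Real.rpow_pos_of_pos hg _
    have hane : a ≠ 0 := by positivity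
    have hgg : g ^ (p - 2) * g = g ^ (p - 1) := by
      rw [← Real.rpow_add_one hg.ne' (p - 2), show p - 2 + 1 = p - 1 from by ring]
    have hgv : gradVec (fun y => c * (1 - gsq y ^ p)) x = (-a) • (x : Fin d → ℝ) := by
      rw [gradVec_hfun c p hxne]
      funext i
      simp only [PiLp.smul_apply, Pi.smul_apply, smul_eq_mul, ha, hgdef]
    have hhess : -(hessMat (fun y => c * (1 - gsq y ^ p)) x) =
        Matrix.of fun i j => a * (if i = j then (1:ℝ) else 0) + b * (x i * x j) := by
      ext i j
      rw [Matrix.neg_apply, hessMat_hfun c p hxne, Matrix.of_apply, ha, hb]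
      ring
    have hSg : (∑ i, (x : Fin d → ℝ) i ^ 2) = g := rfl
    have hlam : a + b * (∑ i, (x : Fin d → ℝ) i ^ 2) ≠ 0 ∨ d = 1 := by
      by_cases hd1 : d = 1
      · exact Or.inr hd1
      · left
        have hd2 : 2 ≤ d := by omega
        have hd2R : (2:ℝ) ≤ (d:ℝ) := by exact_mod_cast hd2
        rw [hSg]
        have hval : a + b * g = 2 * (c * p) * g ^ (p - 1) * (2 * p - 1) := by
          rw [ha, hb]
          calc 2 * (c * p) * g ^ (p - 1) + 2 * (c * p) * ((p - 1) * g ^ (p - 2) * 2) * g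
              = 2 * (c * p) * g ^ (p - 1) + 4 * (c * p) * (p - 1) * (g ^ (p - 2) * g) := by
                ring
            _ = 2 * (c * p) * g ^ (p - 1) * (2 * p - 1) := by rw [hgg]; ring
        rw [hval]
        have h2p1 : 0 < 2 * p - 1 := by
          rw [hp]
          rw [show 2 * ((d:ℝ) / ((d:ℝ) + 1)) - 1 = ((d:ℝ) - 1) / ((d:ℝ) + 1) by
            field_simp; ring]
          apply div_pos <;> linarith
        positivity
    have key := cof_mulVec_eig a b (x : Fin d → ℝ) hane hlam
    rw [hgv, hhess]
    rw [Matrix.mulVec_smul, key]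
    have hdot : ((-a) • (x : Fin d → ℝ)) ⬝ᵥ ((-a) • (a ^ (d - 1)) • (x : Fin d → ℝ))
        = a ^ (d + 1) * g := by
      simp only [dotProduct, PiLp.smul_apply, Pi.smul_apply, smul_eq_mul]
      rw [Finset.sum_congr rfl fun i _ => (by ring :
        -a * (x : Fin d → ℝ) i * (-a * (a ^ (d - 1) * (x : Fin d → ℝ) i))
          = (a ^ (d - 1) * a * a) * (x : Fin d → ℝ) i ^ 2), ← Finset.mul_sum, hSg]
      congr 1
      rw [← pow_succ, ← pow_succ]
      congr 1
      omega
    rw [hdot]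
    have hcp : 2 * (c * p) = V ^ (-(2:ℝ) / ((d:ℝ) + 1)) := by
      rw [hc, hp]
      field_simp
    have hapow : a ^ (d + 1) = V ^ (-(2:ℝ)) * g ^ (-(1:ℝ)) := by
      rw [ha, hcp, mul_pow, ← Real.rpow_natCast (V ^ (-(2:ℝ) / ((d:ℝ) + 1))) (d+1),
        ← Real.rpow_natCast (g ^ (p - 1)) (d+1),
        ← Real.rpow_mul hVpos.le, ← Real.rpow_mul hg.le]
      congr 2
      · push_cast; field_simp
      · push_cast; rw [hp]; field_simp; ring
    rw [hapow]
    have : g ^ (-(1:ℝ)) * g = 1 := by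
      rw [Real.rpow_neg_one]
      field_simp
    rw [mul_assoc, this, mul_one]
    rw [show (-(2:ℝ)) = ((-2:ℤ):ℝ) by norm_num, Real.rpow_intCast]
end
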